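/- arXiv:2202.01298 — 4 statements merged into one kernel-verified Lean document; each statement's English description precedes it below -/
import Mathlib

section
/- Let Ω = {Z_1,…,Z_N} be a finite subset of V_nc with Z_i ∈ V^{n_i×n_i}, N₀ = ∑ n_i, Z^{(0)} = ⊕_{i=1}^N Z_i, and let S = {α ∈ ℂ^{N₀×N₀} : α Z^{(0)} = Z^{(0)} α} be the intertwining algebra. A graded kernel K on Ω with values in L(A_nc, L(Y)_nc) is a noncommutative kernel if and only if the associated map φ_K : A^{N₀×N₀} → L(Y^{N₀}) is an (S,S*)-bimodule map. Conversely, every (S,S*)-bimodule map φ : A^{N₀×N₀} → L(Y^{N₀}) equals φ_K for a uniquely determined noncommutative kernel K on Ω. -/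
open scoped ComplexOrder Matrix

noncomputable section

namespace NCK

/-! ## Actions of scalar complex matrices on matrices over a `ℂ`-module -/

/-- Left action `α · Z` of a complex scalar matrix on a matrix over a `ℂ`-module. -/
def cMul {p q r : Type*} [Fintype q] {M : Type*} [AddCommMonoid M] [Module ℂ M]
    (α : Matrix p q ℂ) (Z : Matrix q r M) : Matrix p r M :=
  Matrix.of fun i k => ∑ j, α i j • Z j k

/-- Right action `Z · α` of a complex scalar matrix on a matrix over a `ℂ`-module. -/
def mulC {p q r : Type*} [Fintype q] {M : Type*} [AddCommMonoid M] [Module ℂ M]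
    (Z : Matrix p q M) (α : Matrix q r ℂ) : Matrix p r M :=
  Matrix.of fun i k => ∑ j, α j k • Z i j

/-- The sandwich `α · P · βᴴ`. -/
def sandwich {p q p' q' : Type*} [Fintype p] [Fintype q] {M : Type*} [AddCommMonoid M]
    [Module ℂ M] (α : Matrix p' p ℂ) (P : Matrix p q M) (β : Matrix q' q ℂ) :
    Matrix p' q' M :=
  mulC (cMul α P) βᴴ

/-- A scalar complex matrix viewed as a matrix over the algebra `A`, i.e. `α ⊗ 1_A`. -/
def matC {p q : Type*} (A : Type*) [Semiring A] [Algebra ℂ A] (α : Matrix p q ℂ) :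
    Matrix p q A :=
  α.map (algebraMap ℂ A)

/-! ## Positivity and norm bounds for matrices over `*`-rings and for operator matrices -/

/-- Positivity of a square matrix over a `*`-ring, via factorization `Q = Cᴴ * C`
(the standard characterization of positivity in a matrix `C⋆`-algebra). -/
def MatPos {n : Type*} [Fintype n] {R : Type*} [NonUnitalSemiring R] [StarRing R]
    (Q : Matrix n n R) : Prop :=
  ∃ C : Matrix n n R, Q = Cᴴ * C

/-- `‖Q‖ ≤ c` for a matrix over a unital `*`-algebra, expressed as positivity of
`c² • 1 - Qᴴ * Q`. -/
def MatNormLe {n : Type*} [Fintype n] [DecidableEq n] {R : Type*} [Ring R] [StarRing R]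
    [Algebra ℂ R] (Q : Matrix n n R) (c : ℝ) : Prop :=
  MatPos ((((c : ℂ) ^ 2) • (1 : Matrix n n R)) - Qᴴ * Q)

/-- Positivity of an element of a `C⋆`-algebra, via factorization `x = (star c) * c`. -/
def elemPos {R : Type*} [Mul R] [Star R] (x : R) : Prop :=
  ∃ c : R, x = star c * c

variable {Y : Type*} [NormedAddCommGroup Y] [InnerProductSpace ℂ Y]

/-- Positivity of a square matrix of Hilbert-space operators, via the quadratic form. -/
def OpMatPos {n : Type*} [Fintype n] (T : Matrix n n (Y →L[ℂ] Y)) : Prop :=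
  ∀ y : n → Y, 0 ≤ ∑ i, ∑ j, (inner ℂ (y i) (T i j (y j)) : ℂ)

/-- Positivity of a doubly indexed (block) matrix of Hilbert-space operators. -/
def OpMatPos2 {k n : Type*} [Fintype k] [Fintype n]
    (T : Matrix k k (Matrix n n (Y →L[ℂ] Y))) : Prop :=
  ∀ y : k → n → Y, 0 ≤ ∑ i, ∑ j, ∑ a, ∑ b, (inner ℂ (y i a) (T i j a b (y j b)) : ℂ)

/-- `‖T‖ ≤ c` for a matrix of Hilbert-space operators. -/
def OpMatNormLe {p q : Type*} [Fintype p] [Fintype q]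
    (T : Matrix p q (Y →L[ℂ] Y)) (c : ℝ) : Prop :=
  ∀ y : q → Y, ∑ i, ‖∑ j, T i j (y j)‖ ^ 2 ≤ c ^ 2 * ∑ j, ‖y j‖ ^ 2

/-- `‖T‖ ≤ c` for a doubly indexed (block) matrix of Hilbert-space operators. -/
def OpMatNormLe2 {k n : Type*} [Fintype k] [Fintype n]
    (T : Matrix k k (Matrix n n (Y →L[ℂ] Y))) (c : ℝ) : Prop :=
  ∀ y : k → n → Y,
    ∑ i, ∑ a, ‖∑ j, ∑ b, T i j a b (y j b)‖ ^ 2 ≤ c ^ 2 * ∑ j, ∑ b, ‖y j b‖ ^ 2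

/-! ## Completely positive / completely bounded / bimodule maps on matrix algebras -/

/-- A map `φ : A^{ι×ι} → L(Y)^{ι×ι} (≅ L(Y^ι))` is completely positive if all its matrix
amplifications map positive elements to positive elements. -/
def IsCPMap {A : Type*} [NonUnitalSemiring A] [StarRing A] {ι : Type*} [Fintype ι]
    (φ : Matrix ι ι A → Matrix ι ι (Y →L[ℂ] Y)) : Prop :=
  ∀ (k : ℕ) (Q : Matrix (Fin k) (Fin k) (Matrix ι ι A)),
    MatPos Q → OpMatPos2 (Matrix.of fun i j => φ (Q i j))

/-- A map `φ : A^{ι×ι} → L(Y)^{ι×ι} (≅ L(Y^ι))` is completely bounded if the norms of its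
matrix amplifications are uniformly bounded. -/
def IsCBMap {A : Type*} [Ring A] [StarRing A] [Algebra ℂ A] {ι : Type*} [Fintype ι]
    [DecidableEq ι] (φ : Matrix ι ι A → Matrix ι ι (Y →L[ℂ] Y)) : Prop :=
  ∃ c : ℝ, ∀ (k : ℕ) (Q : Matrix (Fin k) (Fin k) (Matrix ι ι A)),
    MatNormLe Q 1 → OpMatNormLe2 (Matrix.of fun i j => φ (Q i j)) c

/-- `φ` is an `(S, S^*)`-bimodule map: `φ (α · P · β^*) = L_α (φ P) L_{β^*}` for `α, β ∈ S`. -/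
def IsBimod {ι : Type*} [Fintype ι] {A B : Type*} [AddCommMonoid A] [Module ℂ A]
    [AddCommMonoid B] [Module ℂ B] (S : Set (Matrix ι ι ℂ))
    (φ : Matrix ι ι A → Matrix ι ι B) : Prop :=
  ∀ α ∈ S, ∀ β ∈ S, ∀ P, φ (sandwich α P β) = sandwich α (φ P) β

/-! ## Noncommutative sets, functions and kernels -/

/-- A subset of the noncommutative space `V_nc`, given levelwise. -/
abbrev NCSet (V : Type*) := ∀ n : ℕ, Set (Matrix (Fin n) (Fin n) V)

/-- The type of graded kernels on all of `V_nc` with values in `L(A_nc, B_nc)`;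
a kernel "on `Ω`" is such a family, with all conditions imposed only at points of `Ω`. -/
abbrev KernelFam (V A B : Type*) :=
  ∀ n m : ℕ, Matrix (Fin n) (Fin n) V → Matrix (Fin m) (Fin m) V →
    (Matrix (Fin n) (Fin m) A → Matrix (Fin n) (Fin m) B)

/-- A graded kernel assigns a *linear* map `K(Z,W) : A^{n×m} → B^{n×m}` to points of `Ω`. -/
def GradedLinearOn {V A B : Type*} [AddCommMonoid A] [Module ℂ A] [AddCommMonoid B]
    [Module ℂ B] (Ω : NCSet V) (K : KernelFam V A B) : Prop :=
  ∀ n m Z W, Z ∈ Ω n → W ∈ Ω m → IsLinearMap ℂ (K n m Z W)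

/-- `K` respects intertwinings at points of `Ω`: whenever `α Z = Z' α` and `β W = W' β`,
`α K(Z,W)(P) β^* = K(Z',W')(α P β^*)`. -/
def IsNCKernelOn {V : Type*} [AddCommMonoid V] [Module ℂ V] {A B : Type*}
    [AddCommMonoid A] [Module ℂ A] [AddCommMonoid B] [Module ℂ B]
    (Ω : NCSet V) (K : KernelFam V A B) : Prop :=
  ∀ (n n' m m' : ℕ) (Z : Matrix (Fin n) (Fin n) V) (Z' : Matrix (Fin n') (Fin n') V)
    (W : Matrix (Fin m) (Fin m) V) (W' : Matrix (Fin m') (Fin m') V),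
    Z ∈ Ω n → Z' ∈ Ω n' → W ∈ Ω m → W' ∈ Ω m' →
    ∀ (α : Matrix (Fin n') (Fin n) ℂ) (β : Matrix (Fin m') (Fin m) ℂ),
      cMul α Z = mulC Z' α → cMul β W = mulC W' β →
      ∀ P, sandwich α (K n m Z W P) β = K n' m' Z' W' (sandwich α P β)

/-- `K` is Hermitian on `Ω`: `K(W,Z)(P^*) = (K(Z,W)(P))^*`. -/
def IsHermitianOn {V A B : Type*} [Star A] [Star B] (Ω : NCSet V) (K : KernelFam V A B) :
    Prop :=
  ∀ n m Z W, Z ∈ Ω n → W ∈ Ω m → ∀ P : Matrix (Fin n) (Fin m) A,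
    K m n W Z Pᴴ = (K n m Z W P)ᴴ

/-- The complete positivity condition for a kernel with values in `L(A_nc, L(Y)_nc)`,
in the Hilbert-space (quadratic form) formulation. -/
def IsCPOnH {V : Type*} {A : Type*} [NonUnitalSemiring A] [StarRing A]
    (Ω : NCSet V) (K : KernelFam V A (Y →L[ℂ] Y)) : Prop :=
  ∀ (L : ℕ) (ns : Fin L → ℕ) (Z : ∀ l, Matrix (Fin (ns l)) (Fin (ns l)) V),
    (∀ l, Z l ∈ Ω (ns l)) →
    ∀ (P : ∀ l, Matrix (Fin (ns l)) (Fin 1) A) (y : ∀ l, Fin (ns l) → Y),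
      0 ≤ ∑ l, ∑ l', ∑ a, ∑ b,
        (inner ℂ (y l a) (K (ns l) (ns l') (Z l) (Z l') (P l * (P l')ᴴ) a b (y l' b)) : ℂ)

/-- The complete positivity condition for a kernel with values in `L(A_nc, B_nc)`,
`B` a `C⋆`-algebra, in the `C⋆`-algebraic formulation. -/
def IsCPOnC {V : Type*} {A B : Type*} [NonUnitalSemiring A] [StarRing A]
    [NonUnitalSemiring B] [StarRing B] (Ω : NCSet V) (K : KernelFam V A B) : Prop :=
  ∀ (L : ℕ) (ns : Fin L → ℕ) (Z : ∀ l, Matrix (Fin (ns l)) (Fin (ns l)) V),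
    (∀ l, Z l ∈ Ω (ns l)) →
    ∀ (a : ∀ l, Matrix (Fin (ns l)) (Fin 1) A) (b : ∀ l, Matrix (Fin (ns l)) (Fin 1) B),
      elemPos (∑ l, ∑ l',
        ((b l)ᴴ * (K (ns l) (ns l') (Z l) (Z l') (a l * (a l')ᴴ)) * b l') 0 0)

/-- Completely positive noncommutative kernel on `Ω` (Hilbert-space-valued version). -/
def IsCPNCKernelOnH {V : Type*} [AddCommMonoid V] [Module ℂ V] {A : Type*}
    [NonUnitalSemiring A] [StarRing A] [Module ℂ A] (Ω : NCSet V)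
    (K : KernelFam V A (Y →L[ℂ] Y)) : Prop :=
  GradedLinearOn Ω K ∧ IsNCKernelOn Ω K ∧ IsCPOnH Ω K

/-- Completely positive noncommutative kernel on `Ω` (`C⋆`-algebra-valued version). -/
def IsCPNCKernelOnC {V : Type*} [AddCommMonoid V] [Module ℂ V] {A B : Type*}
    [NonUnitalSemiring A] [StarRing A] [Module ℂ A]
    [NonUnitalSemiring B] [StarRing B] [Module ℂ B] (Ω : NCSet V)
    (K : KernelFam V A B) : Prop :=
  GradedLinearOn Ω K ∧ IsNCKernelOn Ω K ∧ IsCPOnC Ω K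

/-- Noncommutative function `H` on `Ω` with values in `W_nc`:
graded, and `Z α = α Z'` implies `H(Z) (α ⊗ 1) = (α ⊗ 1) H(Z')`. -/
def IsNCFunOn {V W : Type*} [AddCommMonoid V] [Module ℂ V] [AddCommMonoid W] [Module ℂ W]
    (Ω : NCSet V) (H : ∀ n, Matrix (Fin n) (Fin n) V → Matrix (Fin n) (Fin n) W) : Prop :=
  ∀ (n m : ℕ) (Z : Matrix (Fin n) (Fin n) V) (Z' : Matrix (Fin m) (Fin m) V),
    Z ∈ Ω n → Z' ∈ Ω m → ∀ α : Matrix (Fin n) (Fin m) ℂ,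
      mulC Z α = cMul α Z' → mulC (H n Z) α = cMul α (H m Z')

/-! ## Kernels on a finite (indexed) set of points -/

/-- Kernels on a finite set of points `Z i`, `i : Fin Np`, of sizes `d i`. -/
abbrev KernelIx {Np : ℕ} (d : Fin Np → ℕ) (A B : Type*) :=
  ∀ i j : Fin Np, Matrix (Fin (d i)) (Fin (d j)) A → Matrix (Fin (d i)) (Fin (d j)) B

/-- Each value `K(Z_i, Z_j)` is a linear map. -/
def GradedLinearIx {Np : ℕ} {d : Fin Np → ℕ} {A B : Type*} [AddCommMonoid A] [Module ℂ A]
    [AddCommMonoid B] [Module ℂ B] (K : KernelIx d A B) : Prop :=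
  ∀ i j, IsLinearMap ℂ (K i j)

/-- The respects-intertwinings condition for a kernel on the finite set of points `Z`. -/
def IsNCKernelIx {V : Type*} [AddCommMonoid V] [Module ℂ V] {Np : ℕ} {d : Fin Np → ℕ}
    {A B : Type*} [AddCommMonoid A] [Module ℂ A] [AddCommMonoid B] [Module ℂ B]
    (Z : ∀ i, Matrix (Fin (d i)) (Fin (d i)) V) (K : KernelIx d A B) : Prop :=
  ∀ (i i' j j' : Fin Np) (α : Matrix (Fin (d i')) (Fin (d i)) ℂ)
    (β : Matrix (Fin (d j')) (Fin (d j)) ℂ),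
    cMul α (Z i) = mulC (Z i') α → cMul β (Z j) = mulC (Z j') β →
    ∀ P, sandwich α (K i j P) β = K i' j' (sandwich α P β)

/-- `K(Z_j, Z_i)(P^*) = (K(Z_i, Z_j)(P))^*`. -/
def IsHermitianIx {Np : ℕ} {d : Fin Np → ℕ} {A B : Type*} [Star A] [Star B]
    (K : KernelIx d A B) : Prop :=
  ∀ i j (P : Matrix (Fin (d i)) (Fin (d j)) A), K j i Pᴴ = (K i j P)ᴴ

/-- Complete positivity condition, Hilbert-space version, finite set of points. -/
def IsCPIxH {Np : ℕ} {d : Fin Np → ℕ} {A : Type*} [NonUnitalSemiring A] [StarRing A]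
    (K : KernelIx d A (Y →L[ℂ] Y)) : Prop :=
  ∀ (L : ℕ) (f : Fin L → Fin Np) (P : ∀ l, Matrix (Fin (d (f l))) (Fin 1) A)
    (y : ∀ l, Fin (d (f l)) → Y),
    0 ≤ ∑ l, ∑ l', ∑ a, ∑ b,
      (inner ℂ (y l a) (K (f l) (f l') (P l * (P l')ᴴ) a b (y l' b)) : ℂ)

/-- Complete positivity condition, `C⋆`-algebraic version, finite set of points. -/
def IsCPIxC {Np : ℕ} {d : Fin Np → ℕ} {A B : Type*} [NonUnitalSemiring A] [StarRing A]
    [NonUnitalSemiring B] [StarRing B] (K : KernelIx d A B) : Prop :=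
  ∀ (L : ℕ) (f : Fin L → Fin Np) (a : ∀ l, Matrix (Fin (d (f l))) (Fin 1) A)
    (b : ∀ l, Matrix (Fin (d (f l))) (Fin 1) B),
    elemPos (∑ l, ∑ l', ((b l)ᴴ * (K (f l) (f l') (a l * (a l')ᴴ)) * b l') 0 0)

/-- Completely positive nc kernel on a finite set of points (Hilbert version). -/
def IsCPNCKernelIxH {V : Type*} [AddCommMonoid V] [Module ℂ V] {Np : ℕ} {d : Fin Np → ℕ}
    {A : Type*} [NonUnitalSemiring A] [StarRing A] [Module ℂ A]
    (Z : ∀ i, Matrix (Fin (d i)) (Fin (d i)) V) (K : KernelIx d A (Y →L[ℂ] Y)) : Prop :=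
  GradedLinearIx K ∧ IsNCKernelIx Z K ∧ IsCPIxH K

/-- Completely positive nc kernel on a finite set of points (`C⋆` version). -/
def IsCPNCKernelIxC {V : Type*} [AddCommMonoid V] [Module ℂ V] {Np : ℕ} {d : Fin Np → ℕ}
    {A B : Type*} [NonUnitalSemiring A] [StarRing A] [Module ℂ A]
    [NonUnitalSemiring B] [StarRing B] [Module ℂ B]
    (Z : ∀ i, Matrix (Fin (d i)) (Fin (d i)) V) (K : KernelIx d A B) : Prop :=
  GradedLinearIx K ∧ IsNCKernelIx Z K ∧ IsCPIxC K

/-! ## The block-matrix encoding of a kernel on a finite set of points -/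

/-- The block index set for the direct sum point `Z^{(0)} = ⊕ᵢ Z_i`. -/
abbrev BIx {Np : ℕ} (d : Fin Np → ℕ) : Type := Σ i : Fin Np, Fin (d i)

/-- The direct sum `Z^{(0)} = ⊕ᵢ Z_i` of a finite family of nc points. -/
def dirSum {V : Type*} [Zero V] {Np : ℕ} {d : Fin Np → ℕ}
    (Z : ∀ i, Matrix (Fin (d i)) (Fin (d i)) V) : Matrix (BIx d) (BIx d) V :=
  Matrix.of fun x y =>
    if h : x.1 = y.1 then Z x.1 x.2 (Fin.cast (congrArg d h.symm) y.2) else 0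

/-- The intertwining algebra `S = {α : α Z^{(0)} = Z^{(0)} α}` of the direct-sum point. -/
def interAlg {V : Type*} [AddCommMonoid V] [Module ℂ V] {Np : ℕ} {d : Fin Np → ℕ}
    (Z : ∀ i, Matrix (Fin (d i)) (Fin (d i)) V) : Set (Matrix (BIx d) (BIx d) ℂ) :=
  {α | cMul α (dirSum Z) = mulC (dirSum Z) α}

/-- The block map `φ_K ([P_{ij}]) = [K(Z_i,Z_j)(P_{ij})]` associated with a kernel on a
finite set of points. -/
def phiK {Np : ℕ} {d : Fin Np → ℕ} {A B : Type*} (K : KernelIx d A B) :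
    Matrix (BIx d) (BIx d) A → Matrix (BIx d) (BIx d) B :=
  fun P => Matrix.of fun x y =>
    K x.1 y.1 (Matrix.of fun a b => P ⟨x.1, a⟩ ⟨y.1, b⟩) x.2 y.2

/-- The block map associated with a kernel and a finite tuple `f` of (indices of) points. -/
def phiKt {Np : ℕ} {d : Fin Np → ℕ} {A B : Type*} {L : ℕ} (f : Fin L → Fin Np)
    (K : KernelIx d A B) :
    Matrix (Σ l, Fin (d (f l))) (Σ l, Fin (d (f l))) A →
      Matrix (Σ l, Fin (d (f l))) (Σ l, Fin (d (f l))) B :=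
  fun P => Matrix.of fun x y =>
    K (f x.1) (f y.1) (Matrix.of fun a b => P ⟨x.1, a⟩ ⟨y.1, b⟩) x.2 y.2

/-- The block map associated with a general kernel and a finite tuple of points. -/
def phiKg {V A B : Type*} (K : KernelFam V A B) {L : ℕ} (ns : Fin L → ℕ)
    (Z : ∀ l, Matrix (Fin (ns l)) (Fin (ns l)) V) :
    Matrix (Σ l, Fin (ns l)) (Σ l, Fin (ns l)) A →
      Matrix (Σ l, Fin (ns l)) (Σ l, Fin (ns l)) B :=
  fun P => Matrix.of fun x y =>
    K (ns x.1) (ns y.1) (Z x.1) (Z y.1) (Matrix.of fun a b => P ⟨x.1, a⟩ ⟨y.1, b⟩) x.2 y.2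

/-! ## Full nc sets and envelopes -/

/-- Direct sum of two nc points. -/
def dsum2 {V : Type*} [Zero V] {n m : ℕ} (Z : Matrix (Fin n) (Fin n) V)
    (W : Matrix (Fin m) (Fin m) V) : Matrix (Fin (n + m)) (Fin (n + m)) V :=
  Matrix.of fun i j =>
    Sum.elim
      (fun a => Sum.elim (fun b => Z a b) (fun _ => (0 : V)) (finSumFinEquiv.symm j))
      (fun a => Sum.elim (fun _ => (0 : V)) (fun b => W a b) (finSumFinEquiv.symm j))
      (finSumFinEquiv.symm i)

/-- A full nc set: closed under direct sums and invariant under left injective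
intertwinings. -/
def IsFullNC {V : Type*} [AddCommMonoid V] [Module ℂ V] (Ξ : NCSet V) : Prop :=
  (∀ (n m : ℕ) (Z : Matrix (Fin n) (Fin n) V) (W : Matrix (Fin m) (Fin m) V),
      Z ∈ Ξ n → W ∈ Ξ m → dsum2 Z W ∈ Ξ (n + m)) ∧
  (∀ (n m : ℕ) (Z : Matrix (Fin n) (Fin n) V) (Z' : Matrix (Fin m) (Fin m) V)
      (ι : Matrix (Fin n) (Fin m) ℂ), Z ∈ Ξ n → Function.Injective ι.mulVec →
      cMul ι Z' = mulC Z ι → Z' ∈ Ξ m)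

/-- The full nc envelope of a subset `Ω` of `V_nc`. -/
def fullEnvelope {V : Type*} [AddCommMonoid V] [Module ℂ V] (Ω : NCSet V) : NCSet V :=
  fun n => {Z | ∀ Ξ : NCSet V, IsFullNC Ξ → (∀ k, Ω k ⊆ Ξ k) → Z ∈ Ξ n}

/-! ## 2×2 operator blocks -/

/-- A `2 × 2` matrix of operators on `Y`, as an operator on `Y ⊕ Y` (ℓ²-sum). -/
def blk2 (T : Matrix (Fin 2) (Fin 2) (Y →L[ℂ] Y)) :
    (PiLp 2 fun _ : Fin 2 => Y) →L[ℂ] (PiLp 2 fun _ : Fin 2 => Y) :=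
  ((PiLp.continuousLinearEquiv 2 ℂ (fun _ : Fin 2 => Y)).symm.toContinuousLinearMap) ∘L
    ((ContinuousLinearMap.pi fun i => ∑ j, (T i j) ∘L (ContinuousLinearMap.proj j)) ∘L
      ((PiLp.continuousLinearEquiv 2 ℂ (fun _ : Fin 2 => Y)).toContinuousLinearMap))

/-- Complete positivity for a map `φ : A → L(Y)` defined on a `C⋆`-algebra `A`. -/
def IsCPMapE {A : Type*} [NonUnitalSemiring A] [StarRing A] (φ : A → (Y →L[ℂ] Y)) : Prop :=
  ∀ (k : ℕ) (Q : Matrix (Fin k) (Fin k) A), MatPos Q →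
    OpMatPos (Matrix.of fun i j => φ (Q i j))

/-- Complete boundedness for a map `φ : A → L(Y)` defined on a `C⋆`-algebra `A`. -/
def IsCBMapE {A : Type*} [Ring A] [StarRing A] [Algebra ℂ A] (φ : A → (Y →L[ℂ] Y)) : Prop :=
  ∃ c : ℝ, ∀ (k : ℕ) (Q : Matrix (Fin k) (Fin k) A),
    MatNormLe Q 1 → OpMatNormLe (Matrix.of fun i j => φ (Q i j)) c

/-- The strict positivity domain `ℙ_𝔔 = {Z ∈ Ξ : 𝔔(Z,Z)(I) ≻ 0}` of a kernel `𝔔` on `Ξ`. -/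
def posDom {V : Type*} {N : Type*} [NormedAddCommGroup N] [InnerProductSpace ℂ N]
    [CompleteSpace N] (Ξ : NCSet V) (Q : KernelFam V ℂ (N →L[ℂ] N)) : NCSet V :=
  fun n => {Z | Z ∈ Ξ n ∧ ∃ ε : ℝ, 0 < ε ∧
    MatPos (Q n n Z Z 1 - (ε : ℂ) • (1 : Matrix (Fin n) (Fin n) (N →L[ℂ] N)))}

/-! A matrix indexed by `Σ i, Fin (d i)` is determined by its blocks, and `φ_K` acts blockwise
by the maps `K(Z_i, Z_j)`. Block multiplication against the block-diagonal `Z⁽⁰⁾` shows that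
the `(i, i')` block of any `α ∈ S` intertwines `Z_{i'}` with `Z_i`, and conversely that a single
intertwiner placed in block `(i', i)` (zeros elsewhere) lies in `S`. Expanding `α P β*` blockwise
turns the nc condition into the bimodule property; sandwiching with single-block elements of `S`
recovers the nc condition from it. A bimodule map commutes with the block projections
`E_i ∈ S`, so the `(i, j)` block of `φ(P)` only depends on the `(i, j)` block of `P`, which is
how `K(Z_i, Z_j)` is read off `φ`. -/

theorem cMul_zero {p q r : Type*} [Fintype q] {M : Type*} [AddCommMonoid M] [Module ℂ M]
    (α : Matrix p q ℂ) : cMul α (0 : Matrix q r M) = 0 := by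
  ext; simp [cMul]

theorem zero_cMul {p q r : Type*} [Fintype q] {M : Type*} [AddCommMonoid M] [Module ℂ M]
    (P : Matrix q r M) : cMul (0 : Matrix p q ℂ) P = 0 := by
  ext; simp [cMul]

theorem mulC_zero {p q r : Type*} [Fintype q] {M : Type*} [AddCommMonoid M] [Module ℂ M]
    (P : Matrix p q M) : mulC P (0 : Matrix q r ℂ) = 0 := by
  ext; simp [mulC]

theorem zero_mulC {p q r : Type*} [Fintype q] {M : Type*} [AddCommMonoid M] [Module ℂ M]
    (α : Matrix q r ℂ) : mulC (0 : Matrix p q M) α = 0 := by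
  ext; simp [mulC]

theorem sum_mulC {p q r ι : Type*} [Fintype q] {M : Type*} [AddCommMonoid M] [Module ℂ M]
    (s : Finset ι) (P : ι → Matrix p q M) (α : Matrix q r ℂ) :
    mulC (∑ t ∈ s, P t) α = ∑ t ∈ s, mulC (P t) α := by
  ext; simp [mulC, Matrix.sum_apply, Finset.smul_sum, Finset.sum_comm (s := s)]

theorem cMul_one {p r : Type*} [Fintype p] [DecidableEq p] {M : Type*} [AddCommMonoid M]
    [Module ℂ M] (P : Matrix p r M) : cMul (1 : Matrix p p ℂ) P = P := by
  ext; simp [cMul, Matrix.one_apply, ite_smul]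

theorem mulC_one {p r : Type*} [Fintype r] [DecidableEq r] {M : Type*} [AddCommMonoid M]
    [Module ℂ M] (P : Matrix p r M) : mulC P (1 : Matrix r r ℂ) = P := by
  ext; simp [mulC, Matrix.one_apply, ite_smul]

theorem sandwich_one_one {p q : Type*} [Fintype p] [Fintype q] [DecidableEq p] [DecidableEq q]
    {M : Type*} [AddCommMonoid M] [Module ℂ M] (P : Matrix p q M) :
    sandwich (1 : Matrix p p ℂ) P (1 : Matrix q q ℂ) = P := by
  rw [sandwich, Matrix.conjTranspose_one, cMul_one, mulC_one]

section Blocks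

variable {Np : ℕ} {d : Fin Np → ℕ}

def block {M : Type*} (i j : Fin Np) (P : Matrix (BIx d) (BIx d) M) :
    Matrix (Fin (d i)) (Fin (d j)) M :=
  Matrix.of fun a b => P ⟨i, a⟩ ⟨j, b⟩

def singleBlock {M : Type*} [Zero M] (i j : Fin Np) (P : Matrix (Fin (d i)) (Fin (d j)) M) :
    Matrix (BIx d) (BIx d) M :=
  Matrix.of fun x y =>
    if h : x.1 = i ∧ y.1 = j then
      P (Fin.cast (congrArg d h.1) x.2) (Fin.cast (congrArg d h.2) y.2) else 0

theorem block_ext {M : Type*} {P Q : Matrix (BIx d) (BIx d) M}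
    (h : ∀ i j, block i j P = block i j Q) : P = Q := by
  ext ⟨i, a⟩ ⟨j, b⟩
  exact congrFun (congrFun (h i j) a) b

@[simp]
theorem block_singleBlock {M : Type*} [Zero M] (i j : Fin Np)
    (P : Matrix (Fin (d i)) (Fin (d j)) M) : block i j (singleBlock i j P) = P := by
  ext a b
  simp [block, singleBlock]

theorem block_singleBlock_of_ne_left {M : Type*} [Zero M] {i j k : Fin Np} (l : Fin Np)
    (P : Matrix (Fin (d i)) (Fin (d j)) M) (hk : k ≠ i) : block k l (singleBlock i j P) = 0 := by
  ext a b
  simp [block, singleBlock, hk]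

theorem block_singleBlock_of_ne_right {M : Type*} [Zero M] {i j l : Fin Np} (k : Fin Np)
    (P : Matrix (Fin (d i)) (Fin (d j)) M) (hl : l ≠ j) : block k l (singleBlock i j P) = 0 := by
  ext a b
  simp [block, singleBlock, hl]

theorem block_conjTranspose {R : Type*} [Star R] (i j : Fin Np) (P : Matrix (BIx d) (BIx d) R) :
    block i j Pᴴ = (block j i P)ᴴ :=
  rfl

theorem conjTranspose_singleBlock {R : Type*} [AddMonoid R] [StarAddMonoid R] (i j : Fin Np)
    (P : Matrix (Fin (d i)) (Fin (d j)) R) : (singleBlock i j P)ᴴ = singleBlock j i Pᴴ := by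
  ext x y
  by_cases hx : x.1 = j <;> by_cases hy : y.1 = i <;> simp [singleBlock, hx, hy]

theorem singleBlock_add {M : Type*} [AddZeroClass M] (i j : Fin Np)
    (P Q : Matrix (Fin (d i)) (Fin (d j)) M) :
    singleBlock i j (P + Q) = singleBlock i j P + singleBlock i j Q := by
  ext x y
  by_cases h : x.1 = i ∧ y.1 = j <;> simp [singleBlock, h]

theorem singleBlock_smul {M : Type*} [AddCommMonoid M] [Module ℂ M] (i j : Fin Np) (c : ℂ)
    (P : Matrix (Fin (d i)) (Fin (d j)) M) :
    singleBlock i j (c • P) = c • singleBlock i j P := by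
  ext x y
  by_cases h : x.1 = i ∧ y.1 = j <;> simp [singleBlock, h]

variable {M : Type*} [AddCommMonoid M] [Module ℂ M]

theorem block_cMul (i j : Fin Np) (α : Matrix (BIx d) (BIx d) ℂ) (P : Matrix (BIx d) (BIx d) M) :
    block i j (cMul α P) = ∑ k, cMul (block i k α) (block k j P) := by
  ext a b
  simp [block, cMul, Matrix.sum_apply, Fintype.sum_sigma]

theorem block_mulC (i j : Fin Np) (P : Matrix (BIx d) (BIx d) M) (α : Matrix (BIx d) (BIx d) ℂ) :
    block i j (mulC P α) = ∑ k, mulC (block i k P) (block k j α) := by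
  ext a b
  simp [block, mulC, Matrix.sum_apply, Fintype.sum_sigma]

theorem block_sandwich (i j : Fin Np) (α β : Matrix (BIx d) (BIx d) ℂ)
    (P : Matrix (BIx d) (BIx d) M) :
    block i j (sandwich α P β) =
      ∑ i', ∑ j', sandwich (block i i' α) (block i' j' P) (block j j' β) := by
  simp only [sandwich, block_mulC, block_cMul, block_conjTranspose, sum_mulC]
  exact Finset.sum_comm

theorem block_cMul_singleBlock (i i' l : Fin Np) (α : Matrix (Fin (d i')) (Fin (d i)) ℂ)
    (P : Matrix (BIx d) (BIx d) M) :
    block i' l (cMul (singleBlock i' i α) P) = cMul α (block i l P) := by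
  rw [block_cMul, Finset.sum_eq_single i (fun k _ hk => by
    rw [block_singleBlock_of_ne_right _ _ hk, zero_cMul]) (by simp), block_singleBlock]

theorem block_cMul_singleBlock_of_ne {i i' k : Fin Np} (l : Fin Np)
    (α : Matrix (Fin (d i')) (Fin (d i)) ℂ) (P : Matrix (BIx d) (BIx d) M) (hk : k ≠ i') :
    block k l (cMul (singleBlock i' i α) P) = 0 := by
  rw [block_cMul]
  exact Finset.sum_eq_zero fun m _ => by rw [block_singleBlock_of_ne_left _ _ hk, zero_cMul]

theorem block_mulC_singleBlock (k j j' : Fin Np) (P : Matrix (BIx d) (BIx d) M)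
    (α : Matrix (Fin (d j)) (Fin (d j')) ℂ) :
    block k j' (mulC P (singleBlock j j' α)) = mulC (block k j P) α := by
  rw [block_mulC, Finset.sum_eq_single j (fun m _ hm => by
    rw [block_singleBlock_of_ne_left _ _ hm, mulC_zero]) (by simp), block_singleBlock]

theorem block_mulC_singleBlock_of_ne {j j' l : Fin Np} (k : Fin Np)
    (P : Matrix (BIx d) (BIx d) M) (α : Matrix (Fin (d j)) (Fin (d j')) ℂ) (hl : l ≠ j') :
    block k l (mulC P (singleBlock j j' α)) = 0 := by
  rw [block_mulC]
  exact Finset.sum_eq_zero fun m _ => by rw [block_singleBlock_of_ne_right _ _ hl, mulC_zero]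

theorem sandwich_singleBlock (i i' j j' : Fin Np) (α : Matrix (Fin (d i')) (Fin (d i)) ℂ)
    (β : Matrix (Fin (d j')) (Fin (d j)) ℂ) (P : Matrix (BIx d) (BIx d) M) :
    sandwich (singleBlock i' i α) P (singleBlock j' j β) =
      singleBlock i' j' (sandwich α (block i j P) β) := by
  refine block_ext fun k l => ?_
  rw [sandwich, conjTranspose_singleBlock]
  by_cases hl : l = j'
  · subst hl
    by_cases hk : k = i'
    · subst hk
      rw [block_mulC_singleBlock, block_cMul_singleBlock, block_singleBlock, sandwich]
    · rw [block_mulC_singleBlock, block_cMul_singleBlock_of_ne _ _ _ hk, zero_mulC,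
        block_singleBlock_of_ne_left _ _ hk]
  · rw [block_mulC_singleBlock_of_ne _ _ _ hl, block_singleBlock_of_ne_right _ _ hl]

theorem block_dirSum_self {V : Type*} [Zero V] (Z : ∀ i, Matrix (Fin (d i)) (Fin (d i)) V)
    (i : Fin Np) : block i i (dirSum Z) = Z i := by
  ext a b
  simp [block, dirSum]

theorem block_dirSum_of_ne {V : Type*} [Zero V] (Z : ∀ i, Matrix (Fin (d i)) (Fin (d i)) V)
    {i j : Fin Np} (h : i ≠ j) : block i j (dirSum Z) = 0 := by
  ext a b
  simp [block, dirSum, h]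

end Blocks

section InterAlg

variable {V : Type*} [AddCommMonoid V] [Module ℂ V] {Np : ℕ} {d : Fin Np → ℕ}
  (Z : ∀ i, Matrix (Fin (d i)) (Fin (d i)) V)

theorem cMul_block_eq_mulC_block_of_mem_interAlg {α : Matrix (BIx d) (BIx d) ℂ}
    (hα : α ∈ interAlg Z) (i i' : Fin Np) :
    cMul (block i i' α) (Z i') = mulC (Z i) (block i i' α) := by
  have h := congrArg (block i i') (hα : cMul α (dirSum Z) = mulC (dirSum Z) α)
  rwa [block_cMul, block_mulC,
    Finset.sum_eq_single i' (fun k _ hk => by rw [block_dirSum_of_ne Z hk, cMul_zero]) (by simp),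
    Finset.sum_eq_single i (fun k _ hk => by rw [block_dirSum_of_ne Z (Ne.symm hk), zero_mulC])
      (by simp), block_dirSum_self, block_dirSum_self] at h

theorem singleBlock_mem_interAlg {i i' : Fin Np} {α : Matrix (Fin (d i')) (Fin (d i)) ℂ}
    (h : cMul α (Z i) = mulC (Z i') α) : singleBlock i' i α ∈ interAlg Z := by
  refine block_ext fun k l => ?_
  by_cases hk : k = i'
  · subst hk
    rw [block_cMul_singleBlock]
    by_cases hl : l = i
    · subst hl
      rw [block_mulC_singleBlock, block_dirSum_self, block_dirSum_self, h]
    · rw [block_mulC_singleBlock_of_ne _ _ _ hl, block_dirSum_of_ne Z (Ne.symm hl), cMul_zero]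
  · rw [block_cMul_singleBlock_of_ne _ _ _ hk]
    by_cases hl : l = i
    · subst hl
      rw [block_mulC_singleBlock, block_dirSum_of_ne Z hk, zero_mulC]
    · rw [block_mulC_singleBlock_of_ne _ _ _ hl]

theorem singleBlock_one_mem_interAlg (i : Fin Np) : singleBlock i i 1 ∈ interAlg Z :=
  singleBlock_mem_interAlg Z (by rw [cMul_one, mulC_one])

end InterAlg

section Kernels

variable {Np : ℕ} {d : Fin Np → ℕ} {A B : Type*}

theorem block_phiK (K : KernelIx d A B) (i j : Fin Np) (P : Matrix (BIx d) (BIx d) A) :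
    block i j (phiK K P) = K i j (block i j P) :=
  rfl

theorem phiK_injective [Zero A] : Function.Injective (phiK : KernelIx d A B → _) := by
  intro K K' h
  funext i j P
  simpa only [block_phiK, block_singleBlock] using
    congrArg (block i j) (congrFun h (singleBlock i j P))

variable [AddCommMonoid A] [Module ℂ A] [AddCommMonoid B] [Module ℂ B]

theorem isBimod_phiK {V : Type*} [AddCommMonoid V] [Module ℂ V]
    {Z : ∀ i, Matrix (Fin (d i)) (Fin (d i)) V} {K : KernelIx d A B} (hK : GradedLinearIx K)
    (hNC : IsNCKernelIx Z K) : IsBimod (interAlg Z) (phiK K) := by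
  intro α hα β hβ P
  refine block_ext fun i j => ?_
  rw [block_phiK, block_sandwich, block_sandwich]
  let Kij : _ →ₗ[ℂ] _ := (hK i j).mk' (K i j)
  change Kij _ = _
  simp only [map_sum]
  refine Finset.sum_congr rfl fun i' _ => Finset.sum_congr rfl fun j' _ => ?_
  exact (hNC i' i j' j _ _ (cMul_block_eq_mulC_block_of_mem_interAlg Z hα i i')
    (cMul_block_eq_mulC_block_of_mem_interAlg Z hβ j j') _).symm

theorem isNCKernelIx_of_isBimod_phiK {V : Type*} [AddCommMonoid V] [Module ℂ V]
    {Z : ∀ i, Matrix (Fin (d i)) (Fin (d i)) V} {K : KernelIx d A B}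
    (hφ : IsBimod (interAlg Z) (phiK K)) : IsNCKernelIx Z K := by
  intro i i' j j' α β hα hβ P
  have h := congrArg (block i' j') (hφ _ (singleBlock_mem_interAlg Z hα) _
    (singleBlock_mem_interAlg Z hβ) (singleBlock i j P))
  simpa only [sandwich_singleBlock, block_phiK, block_singleBlock] using h.symm

def kernelOfMap (φ : Matrix (BIx d) (BIx d) A → Matrix (BIx d) (BIx d) B) : KernelIx d A B :=
  fun i j P => block i j (φ (singleBlock i j P))

theorem gradedLinearIx_kernelOfMap
    (φ : Matrix (BIx d) (BIx d) A →ₗ[ℂ] Matrix (BIx d) (BIx d) B) :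
    GradedLinearIx (kernelOfMap φ) := fun i j =>
  ⟨fun P Q => by simp only [kernelOfMap, singleBlock_add, map_add]; rfl,
   fun c P => by simp only [kernelOfMap, singleBlock_smul, map_smul]; rfl⟩

theorem phiK_kernelOfMap {V : Type*} [AddCommMonoid V] [Module ℂ V]
    {Z : ∀ i, Matrix (Fin (d i)) (Fin (d i)) V}
    {φ : Matrix (BIx d) (BIx d) A → Matrix (BIx d) (BIx d) B} (hφ : IsBimod (interAlg Z) φ) :
    phiK (kernelOfMap φ) = φ := by
  funext P
  refine block_ext fun i j => ?_
  have hproj : ∀ Q : Matrix (BIx d) (BIx d) A,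
      sandwich (singleBlock i i 1) Q (singleBlock j j 1) = singleBlock i j (block i j Q) := by
    intro Q; rw [sandwich_singleBlock, sandwich_one_one]
  rw [block_phiK, kernelOfMap, ← hproj,
    hφ _ (singleBlock_one_mem_interAlg Z i) _ (singleBlock_one_mem_interAlg Z j),
    sandwich_singleBlock, sandwich_one_one, block_singleBlock]

end Kernels

theorem statement1_general {V : Type*} [AddCommGroup V] [Module ℂ V]
    {A : Type*} [CStarAlgebra A]
    {Y : Type*} [NormedAddCommGroup Y] [InnerProductSpace ℂ Y]
    {Np : ℕ} (d : Fin Np → ℕ) (Z : ∀ i : Fin Np, Matrix (Fin (d i)) (Fin (d i)) V) :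
    (∀ K : KernelIx d A (Y →L[ℂ] Y), GradedLinearIx K →
        (IsNCKernelIx Z K ↔ IsBimod (interAlg Z) (phiK K))) ∧
    (∀ φ : Matrix (BIx d) (BIx d) A →ₗ[ℂ] Matrix (BIx d) (BIx d) (Y →L[ℂ] Y),
        IsBimod (interAlg Z) ⇑φ →
        ∃! K : KernelIx d A (Y →L[ℂ] Y),
          (GradedLinearIx K ∧ IsNCKernelIx Z K) ∧ phiK K = ⇑φ) := by
  refine ⟨fun K hK => ⟨isBimod_phiK hK, isNCKernelIx_of_isBimod_phiK⟩, fun φ hφ => ?_⟩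
  have hφK : phiK (kernelOfMap φ) = φ := phiK_kernelOfMap hφ
  refine ⟨kernelOfMap φ, ⟨⟨gradedLinearIx_kernelOfMap φ, ?_⟩, hφK⟩, ?_⟩
  · exact isNCKernelIx_of_isBimod_phiK (by rwa [hφK])
  · rintro K ⟨-, hK⟩
    exact phiK_injective (hK.trans hφK.symm)

/-- Proposition 2.3(1): for a finite set of nc points
`Ω = {Z 0, …, Z (Np-1)}` with intertwining algebra `S = interAlg Z`, a graded (linear)
kernel `K` on `Ω` is a noncommutative kernel iff the associated block map `φ_K` is an
`(S,S^*)`-bimodule map; conversely every `(S,S^*)`-bimodule map `φ` equals `φ_K` for a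
uniquely determined noncommutative kernel `K` on `Ω`. -/
theorem statement1 {V : Type*} [AddCommGroup V] [Module ℂ V]
    {A : Type*} [CStarAlgebra A]
    {Y : Type*} [NormedAddCommGroup Y] [InnerProductSpace ℂ Y] [CompleteSpace Y]
    {Np : ℕ} (d : Fin Np → ℕ) (Z : ∀ i : Fin Np, Matrix (Fin (d i)) (Fin (d i)) V) :
    (∀ K : KernelIx d A (Y →L[ℂ] Y), GradedLinearIx K →
        (IsNCKernelIx Z K ↔ IsBimod (interAlg Z) (phiK K))) ∧
    (∀ φ : Matrix (BIx d) (BIx d) A →ₗ[ℂ] Matrix (BIx d) (BIx d) (Y →L[ℂ] Y),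
        IsBimod (interAlg Z) ⇑φ →
        ∃! K : KernelIx d A (Y →L[ℂ] Y),
          (GradedLinearIx K ∧ IsNCKernelIx Z K) ∧ phiK K = ⇑φ) :=
  statement1_general d Z

end NCK

end
end

section
/- Let S be a subalgebra of ℂ^{M×M}, A a unital C*-algebra, Y a Hilbert space, and let φ : A^{M×M} → L(Y^M) be a completely positive map admitting a Stinespring representation φ(P) = V π(P) V*, where π : A^{M×M} → L(X) is a unital *-representation on a Hilbert space X and V ∈ L(X, Y^M). Then φ is an (S,S*)-bimodule map if and only if π(β*·1_A) V* = V* L_{β*} for all β ∈ S, equivalently L_α V = V π(α·1_A) for all α ∈ S. Here α·1_A ∈ A^{M×M} denotes the scalar matrix α with entries multiplied by the unit of A, and L_α ∈ L(Y^M) denotes multiplication by α. -/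
open scoped ComplexOrder Matrix

noncomputable section

namespace NCK

variable {Y : Type*} [NormedAddCommGroup Y] [InnerProductSpace ℂ Y]

/-! In Stinespring form `φ(P)_{ij} = V_i π(P) V_j^*`, so `φ(α P β^*) = W_α π(P) W_β^*` with
`W_α = V π(α ⊗ 1_A)`, while `α φ(P) β^* = U_α π(P) U_β^*` with `U_α = L_α V`. Hence `U_α = W_α`
for all `α ∈ S` makes `φ` a bimodule map. Conversely, the bimodule identities for the pairs
`(α, α)` and `(α, 1)` show that `U U^*`, `W W^*` and `W U^*` all equal `(α φ(1) α^*)`, so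
`(U - W)(U - W)^* = 0` and `U = W` by the C⋆-identity. The form `π(β^* ⊗ 1_A) V^* = V^* L_{β^*}`
is the adjoint of `L_β V = V π(β ⊗ 1_A)`. -/

open ContinuousLinearMap
open scoped InnerProduct ComplexConjugate

section ScalarMatrices

variable {ι : Type*} {A : Type*} [Semiring A] [Algebra ℂ A]

lemma matC_one [DecidableEq ι] : matC A (1 : Matrix ι ι ℂ) = 1 :=
  Matrix.map_one _ (map_zero _) (map_one _)

lemma matC_conjTranspose [StarRing A] [StarModule ℂ A] (α : Matrix ι ι ℂ) :
    matC A αᴴ = (matC A α)ᴴ :=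
  Matrix.conjTranspose_map _ fun a => algebraMap_star_comm a

lemma sandwich_eq_mul [Fintype ι] (α β : Matrix ι ι ℂ) (P : Matrix ι ι A) :
    sandwich α P β = matC A α * P * matC A βᴴ := by
  ext i j
  simp only [sandwich, mulC, cMul, matC, Matrix.of_apply, Matrix.mul_apply, Matrix.map_apply,
    Algebra.smul_def, Finset.mul_sum, Finset.sum_mul]
  exact Finset.sum_congr rfl fun l _ => Finset.sum_congr rfl fun k _ => by
    rw [Algebra.commutes, mul_assoc]

end ScalarMatrices

section SesqMatrix

variable {H K Y : Type*}
  [NormedAddCommGroup H] [InnerProductSpace ℂ H]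
  [NormedAddCommGroup K] [InnerProductSpace ℂ K] [CompleteSpace K]
  [NormedAddCommGroup Y] [InnerProductSpace ℂ Y] [CompleteSpace Y]

def sesqMatrix {p q : Type*} (U : p → (H →L[ℂ] Y)) (T : K →L[ℂ] H) (W : q → (K →L[ℂ] Y)) :
    Matrix p q (Y →L[ℂ] Y) :=
  Matrix.of fun i j => U i ∘L T ∘L (W j)†

lemma sandwich_sesqMatrix {p q p' q' : Type*} [Fintype p] [Fintype q]
    (α : Matrix p' p ℂ) (U : p → (H →L[ℂ] Y)) (T : K →L[ℂ] H) (W : q → (K →L[ℂ] Y))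
    (β : Matrix q' q ℂ) :
    sandwich α (sesqMatrix U T W) β =
      sesqMatrix (fun i => ∑ k, α i k • U k) T (fun j => ∑ l, β j l • W l) := by
  ext i j y
  simp [sandwich, mulC, cMul, sesqMatrix, Finset.smul_sum, map_sum, map_smulₛₗ, sum_apply]

lemma eq_of_comp_adjoint_eq {u w : K →L[ℂ] Y} (hu : u ∘L u† = w ∘L u†)
    (hw : w ∘L w† = w ∘L u†) : u = w := by
  have huw : u ∘L w† = w ∘L u† :=
    calc u ∘L w† = (w ∘L u†)† := by rw [adjoint_comp, adjoint_adjoint]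
      _ = (u ∘L u†)† := by rw [hu]
      _ = w ∘L u† := by rw [adjoint_comp, adjoint_adjoint, hu]
  have hzero : (u - w)† † ∘L (u - w)† = 0 := by
    simp only [adjoint_adjoint, map_sub, sub_comp, comp_sub, hu, hw, huw, sub_self]
  have hnorm := norm_adjoint_comp_self (adjoint (u - w))
  rw [hzero, norm_zero, eq_comm, mul_self_eq_zero, norm_eq_zero,
    LinearIsometryEquiv.map_eq_zero_iff] at hnorm
  exact sub_eq_zero.mp hnorm

end SesqMatrix

section Stinespring

variable {ι : Type*} [Fintype ι] [DecidableEq ι]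
  {A : Type*} [Ring A] [StarRing A] [Algebra ℂ A] [StarModule ℂ A]
  {X Y : Type*} [NormedAddCommGroup X] [InnerProductSpace ℂ X] [CompleteSpace X]
  [NormedAddCommGroup Y] [InnerProductSpace ℂ Y] [CompleteSpace Y]
  (π : Matrix ι ι A →⋆ₐ[ℂ] (X →L[ℂ] X)) (V : ι → (X →L[ℂ] Y))

lemma adjoint_map_matC (α : Matrix ι ι ℂ) : (π (matC A α))† = π (matC A αᴴ) := by
  rw [← star_eq_adjoint, ← map_star, matC_conjTranspose, Matrix.star_eq_conjTranspose]

lemma sesqMatrix_map_sandwich (α β : Matrix ι ι ℂ) (P : Matrix ι ι A) :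
    sesqMatrix V (π (sandwich α P β)) V =
      sesqMatrix (fun i => V i ∘L π (matC A α)) (π P) (fun j => V j ∘L π (matC A β)) := by
  ext i j : 1
  simp only [sesqMatrix, Matrix.of_apply, sandwich_eq_mul, map_mul, mul_def, adjoint_comp,
    adjoint_map_matC, comp_assoc]

lemma sum_smul_eq_comp_map_matC_iff (α : Matrix ι ι ℂ) (i : ι) :
    ∑ j, α i j • V j = V i ∘L π (matC A α) ↔
      π (matC A αᴴ) ∘L (V i)† = ∑ j, conj (α i j) • (V j)† := by
  rw [← (adjoint (𝕜 := ℂ) (E := X) (F := Y)).injective.eq_iff, eq_comm]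
  simp only [map_sum, map_smulₛₗ, adjoint_comp, adjoint_map_matC]

lemma isBimod_of_sum_smul_eq_comp {S : Set (Matrix ι ι ℂ)}
    (h : ∀ α ∈ S, ∀ i, ∑ j, α i j • V j = V i ∘L π (matC A α)) :
    IsBimod S fun P => sesqMatrix V (π P) V := by
  intro α hα β hβ P
  dsimp only
  rw [sesqMatrix_map_sandwich, sandwich_sesqMatrix]
  congr 1 <;> funext i <;> exact (h _ ‹_› i).symm

lemma sum_smul_eq_comp_of_isBimod (S : Subalgebra ℂ (Matrix ι ι ℂ))
    (h : IsBimod (S : Set (Matrix ι ι ℂ)) fun P => sesqMatrix V (π P) V)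
    {α : Matrix ι ι ℂ} (hα : α ∈ S) (i : ι) :
    ∑ j, α i j • V j = V i ∘L π (matC A α) := by
  have hS : ∀ β ∈ S, ∀ γ ∈ S, ∀ P, sesqMatrix V (π (sandwich β P γ)) V =
      sandwich β (sesqMatrix V (π P) V) γ := h
  set U := fun i => ∑ j, α i j • V j
  set W := fun i => V i ∘L π (matC A α)
  have hWV : sesqMatrix W 1 V = sesqMatrix U 1 V := by
    simpa [sesqMatrix_map_sandwich, sandwich_sesqMatrix, matC_one, one_def, comp_id,
      Matrix.one_apply] using hS α hα 1 (one_mem S) 1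
  have hWU : sesqMatrix W 1 U = sesqMatrix U 1 U := by
    simpa [sandwich_sesqMatrix, Matrix.one_apply] using
      congrArg (sandwich (1 : Matrix ι ι ℂ) · α) hWV
  have hWW : sesqMatrix W 1 W = sesqMatrix U 1 U := by
    simpa [sesqMatrix_map_sandwich, sandwich_sesqMatrix] using hS α hα α hα 1
  have hentry : ∀ U' W' : ι → (X →L[ℂ] Y), sesqMatrix U' 1 W' i i = U' i ∘L (W' i)† :=
    fun _ _ => by simp only [sesqMatrix, Matrix.of_apply, one_def, id_comp]
  refine eq_of_comp_adjoint_eq (u := U i) (w := W i) ?_ ?_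
  · rw [← hentry, ← hentry, hWU]
  · rw [← hentry, ← hentry, hWU, hWW]

lemma isBimod_iff_sum_smul_eq_comp (S : Subalgebra ℂ (Matrix ι ι ℂ)) :
    (IsBimod (S : Set (Matrix ι ι ℂ)) fun P => sesqMatrix V (π P) V) ↔
      ∀ α ∈ S, ∀ i, ∑ j, α i j • V j = V i ∘L π (matC A α) :=
  ⟨fun h _ hα i => sum_smul_eq_comp_of_isBimod π V S h hα i, isBimod_of_sum_smul_eq_comp π V⟩

end Stinespring

theorem statement3_general {M : ℕ} (S : Subalgebra ℂ (Matrix (Fin M) (Fin M) ℂ))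
    {A : Type*} [CStarAlgebra A]
    {Y : Type*} [NormedAddCommGroup Y] [InnerProductSpace ℂ Y] [CompleteSpace Y]
    {X : Type*} [NormedAddCommGroup X] [InnerProductSpace ℂ X] [CompleteSpace X]
    (π : Matrix (Fin M) (Fin M) A →⋆ₐ[ℂ] (X →L[ℂ] X)) (Vc : Fin M → (X →L[ℂ] Y))
    (φ : Matrix (Fin M) (Fin M) A → Matrix (Fin M) (Fin M) (Y →L[ℂ] Y))
    (hrep : ∀ P, φ P = Matrix.of fun i j =>
      (Vc i) ∘L ((π P) ∘L (ContinuousLinearMap.adjoint (Vc j)))) :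
    (IsBimod (S : Set (Matrix (Fin M) (Fin M) ℂ)) φ ↔
      ∀ β ∈ S, ∀ j : Fin M,
        (π (matC A βᴴ)) ∘L (ContinuousLinearMap.adjoint (Vc j)) =
          ∑ k, (starRingEnd ℂ) (β j k) • (ContinuousLinearMap.adjoint (Vc k))) ∧
    (IsBimod (S : Set (Matrix (Fin M) (Fin M) ℂ)) φ ↔
      ∀ α ∈ S, ∀ i : Fin M,
        (∑ j, α i j • Vc j) = (Vc i) ∘L (π (matC A α))) := by
  obtain rfl : φ = fun P => sesqMatrix Vc (π P) Vc := funext hrep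
  rw [isBimod_iff_sum_smul_eq_comp π Vc S]
  exact ⟨forall₂_congr fun β _ => forall_congr' fun j => sum_smul_eq_comp_map_matC_iff π Vc β j,
    Iff.rfl⟩

/-- Theorem 2.4: a completely positive map
`φ(P) = V π(P) V^*` (in Stinespring form, with `V` encoded as the column of operators
`Vc i : X → Y`) is an `(S,S^*)`-bimodule map if and only if
`π(β^* ⊗ 1_A) V^* = V^* L_{β^*}` for all `β ∈ S`, equivalently `L_α V = V π(α ⊗ 1_A)`
for all `α ∈ S`. -/
theorem statement3 {M : ℕ} (S : Subalgebra ℂ (Matrix (Fin M) (Fin M) ℂ))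
    {A : Type*} [CStarAlgebra A]
    {Y : Type*} [NormedAddCommGroup Y] [InnerProductSpace ℂ Y] [CompleteSpace Y]
    {X : Type*} [NormedAddCommGroup X] [InnerProductSpace ℂ X] [CompleteSpace X]
    (π : Matrix (Fin M) (Fin M) A →⋆ₐ[ℂ] (X →L[ℂ] X)) (Vc : Fin M → (X →L[ℂ] Y))
    (φ : Matrix (Fin M) (Fin M) A → Matrix (Fin M) (Fin M) (Y →L[ℂ] Y))
    (hrep : ∀ P, φ P = Matrix.of fun i j =>
      (Vc i) ∘L ((π P) ∘L (ContinuousLinearMap.adjoint (Vc j))))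
    (hcp : IsCPMap φ) :
    (IsBimod (S : Set (Matrix (Fin M) (Fin M) ℂ)) φ ↔
      ∀ β ∈ S, ∀ j : Fin M,
        (π (matC A βᴴ)) ∘L (ContinuousLinearMap.adjoint (Vc j)) =
          ∑ k, (starRingEnd ℂ) (β j k) • (ContinuousLinearMap.adjoint (Vc k))) ∧
    (IsBimod (S : Set (Matrix (Fin M) (Fin M) ℂ)) φ ↔
      ∀ α ∈ S, ∀ i : Fin M,
        (∑ j, α i j • Vc j) = (Vc i) ∘L (π (matC A α))) :=
  statement3_general S π Vc φ hrep

end NCK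

end
end

section
/- Let S be a subalgebra of ℂ^{M×M} and let 𝕊 ⊆ A^{M×M} be an operator system (a unital self-adjoint linear subspace) which is also an (S,S*)-sub-bimodule of A^{M×M} (i.e., α·P·β* ∈ 𝕊 for all P ∈ 𝕊 and α, β ∈ S). Suppose φ₀ : 𝕊 → L(Y^M) is a completely positive map satisfying φ₀(α·P·β*) = L_α φ₀(P) L_{β*} for all α, β ∈ S and P ∈ 𝕊. Then any completely positive map φ : A^{M×M} → L(Y^M) extending φ₀ (φ(P) = φ₀(P) for P ∈ 𝕊) is an (S,S*)-bimodule map on all of A^{M×M}. -/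
open scoped ComplexOrder Matrix

noncomputable section

namespace NCK

variable {Y : Type*} [NormedAddCommGroup Y] [InnerProductSpace ℂ Y]

/-!
Complete positivity of `φ` makes every Gram matrix `(⟪u i, φ ((X i)ᴴ X j) (u j)⟫)ᵢⱼ` positive
semidefinite. For `b = β ⊗ 1` with `β ∈ S`, the bimodule identities at `P = 1` say that
`(bᴴ ⊗ v) - (1 ⊗ βᴴ v)` is a null vector of this form, so it is orthogonal to every `Pᴴ ⊗ u`:
`φ (P bᴴ) = φ P L_{βᴴ}`. Hermitian symmetry of `φ` gives the left version, and the identities at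
`P = 1` hold because `1 ∈ 𝕊` and `φ` extends the bimodule map `φ₀`.
-/

lemma posSemidef_of_dotProduct_mulVec_nonneg {n : Type*} [Fintype n] [DecidableEq n]
    {G : Matrix n n ℂ} (h : ∀ x, 0 ≤ star x ⬝ᵥ (G *ᵥ x)) : G.PosSemidef := by
  rw [← Matrix.isPositive_toEuclideanLin_iff, LinearMap.isPositive_iff_complex]
  intro x
  rw [← inner_conj_symm, EuclideanSpace.inner_eq_star_dotProduct, dotProduct_comm]
  obtain ⟨hre, him⟩ := Complex.le_def.mp (h x)
  have hreal := Complex.conj_eq_iff_im.mpr him.symm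
  rw [Matrix.toLpLin_apply, hreal]
  exact ⟨Complex.conj_eq_iff_re.mp hreal, hre⟩

lemma matPos_gram {k : ℕ} {R : Type*} [NonUnitalSemiring R] [StarRing R] (X : Fin k → R) :
    MatPos (Matrix.of fun i j => star (X i) * X j) := by
  cases k with
  | zero => exact ⟨0, Subsingleton.elim _ _⟩
  | succ k =>
    refine ⟨Matrix.of fun i j => if i = 0 then X j else 0, ?_⟩
    ext i j
    rw [Matrix.mul_apply, Finset.sum_eq_single 0 (fun l _ hl => by simp [hl]) (by simp)]
    simp

section OperatorMatrix

variable {ι : Type*} [Fintype ι] {Y : Type*} [NormedAddCommGroup Y] [InnerProductSpace ℂ Y]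

/-- `opForm T u v = ⟪u, T v⟫` for `T` acting on `Y^ι`. -/
def opForm (T : Matrix ι ι (Y →L[ℂ] Y)) (u v : ι → Y) : ℂ :=
  ∑ a, ∑ b, inner ℂ (u a) (T a b (v b))

def cMulVec (γ : Matrix ι ι ℂ) (v : ι → Y) : ι → Y :=
  fun i => ∑ j, γ i j • v j

lemma cMulVec_one [DecidableEq ι] (v : ι → Y) : cMulVec (1 : Matrix ι ι ℂ) v = v := by
  funext i
  simp [cMulVec, Matrix.one_apply, ite_smul]

lemma opForm_smul_left (T : Matrix ι ι (Y →L[ℂ] Y)) (u v : ι → Y) (t : ℂ) :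
    opForm T (t • u) v = starRingEnd ℂ t * opForm T u v := by
  simp only [opForm, Pi.smul_apply, inner_smul_left, Finset.mul_sum]

lemma opForm_smul_right (T : Matrix ι ι (Y →L[ℂ] Y)) (u v : ι → Y) (t : ℂ) :
    opForm T u (t • v) = t * opForm T u v := by
  simp only [opForm, Pi.smul_apply, map_smul, inner_smul_right, Finset.mul_sum]

lemma opForm_single [DecidableEq ι] (T : Matrix ι ι (Y →L[ℂ] Y)) (i j : ι) (x y : Y) :
    opForm T (Pi.single i x) (Pi.single j y) = inner ℂ x (T i j y) := by
  rw [opForm, Fintype.sum_eq_single i fun a ha => by simp [ha],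
    Fintype.sum_eq_single j fun b hb => by simp [hb]]
  simp

lemma ext_opForm [DecidableEq ι] {T T' : Matrix ι ι (Y →L[ℂ] Y)}
    (h : ∀ u v, opForm T u v = opForm T' u v) : T = T' := by
  ext i j y
  refine ext_inner_left ℂ fun x => ?_
  simpa only [opForm_single] using h (Pi.single i x) (Pi.single j y)

lemma opForm_cMul (γ : Matrix ι ι ℂ) (T : Matrix ι ι (Y →L[ℂ] Y)) (u v : ι → Y) :
    opForm (cMul γ T) u v = opForm T (cMulVec γᴴ u) v := by
  simp only [opForm, cMul, cMulVec, Matrix.of_apply, Matrix.conjTranspose_apply,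
    sum_apply, smul_apply, inner_sum, sum_inner, inner_smul_right, inner_smul_left,
    RCLike.star_def, Complex.conj_conj]
  rw [Finset.sum_comm]
  exact (Finset.sum_congr rfl fun _ _ => Finset.sum_comm).trans Finset.sum_comm

lemma opForm_mulC (T : Matrix ι ι (Y →L[ℂ] Y)) (δ : Matrix ι ι ℂ) (u v : ι → Y) :
    opForm (mulC T δ) u v = opForm T u (cMulVec δ v) := by
  simp only [opForm, mulC, cMulVec, Matrix.of_apply, sum_apply, smul_apply, map_sum, map_smul,
    inner_sum, inner_smul_right]
  exact Finset.sum_congr rfl fun _ _ => Finset.sum_comm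

lemma opForm_sandwich (γ δ : Matrix ι ι ℂ) (T : Matrix ι ι (Y →L[ℂ] Y)) (u v : ι → Y) :
    opForm (sandwich γ T δ) u v = opForm T (cMulVec γᴴ u) (cMulVec δᴴ v) := by
  rw [sandwich, opForm_mulC, opForm_cMul]

end OperatorMatrix

section ScalarMatrix

variable {ι : Type*} [Fintype ι] {A : Type*} [Semiring A] [StarRing A] [Algebra ℂ A]
  [StarModule ℂ A]

lemma sandwich_eq_matC_mul (γ δ : Matrix ι ι ℂ) (P : Matrix ι ι A) :
    sandwich γ P δ = matC A γ * P * (matC A δ)ᴴ := by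
  ext i k
  simp only [sandwich, mulC, cMul, matC, Matrix.of_apply, Matrix.mul_apply, Matrix.map_apply,
    Matrix.conjTranspose_apply, Finset.smul_sum, Finset.sum_mul]
  refine Finset.sum_congr rfl fun c _ => Finset.sum_congr rfl fun j _ => ?_
  rw [Algebra.smul_def, Algebra.smul_def, ← algebraMap_star_comm, Algebra.commutes, mul_assoc]

lemma sandwich_one_one_s4 [DecidableEq ι] (γ : Matrix ι ι ℂ) :
    sandwich γ (1 : Matrix ι ι A) 1 = matC A γ := by
  rw [sandwich_eq_matC_mul, matC, matC, Matrix.map_one _ (map_zero _) (map_one _),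
    Matrix.conjTranspose_one, mul_one, mul_one]

end ScalarMatrix

section CompletelyPositive

variable {ι : Type*} [Fintype ι] {A : Type*} [Semiring A] [StarRing A]
  {Y : Type*} [NormedAddCommGroup Y] [InnerProductSpace ℂ Y]
  {φ : Matrix ι ι A → Matrix ι ι (Y →L[ℂ] Y)}

def cpGram (φ : Matrix ι ι A → Matrix ι ι (Y →L[ℂ] Y)) {k : ℕ} (X : Fin k → Matrix ι ι A)
    (u : Fin k → ι → Y) : Matrix (Fin k) (Fin k) ℂ :=
  Matrix.of fun i j => opForm (φ ((X i)ᴴ * X j)) (u i) (u j)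

lemma posSemidef_cpGram (hφ : IsCPMap φ) {k : ℕ} (X : Fin k → Matrix ι ι A)
    (u : Fin k → ι → Y) : (cpGram φ X u).PosSemidef := by
  refine posSemidef_of_dotProduct_mulVec_nonneg fun s => ?_
  have hform : star s ⬝ᵥ (cpGram φ X u *ᵥ s) =
      ∑ i, ∑ j, opForm (φ ((X i)ᴴ * X j)) (s i • u i) (s j • u j) := by
    simp only [dotProduct, Matrix.mulVec, cpGram, Matrix.of_apply, opForm_smul_left,
      opForm_smul_right, Finset.mul_sum, Pi.star_apply, RCLike.star_def]
    exact Finset.sum_congr rfl fun _ _ => Finset.sum_congr rfl fun _ _ => by ring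
  rw [hform]
  exact hφ k _ (matPos_gram X) fun i => s i • u i

variable [DecidableEq ι]

lemma opForm_conjTranspose (hφ : IsCPMap φ) (P : Matrix ι ι A) (u v : ι → Y) :
    opForm (φ Pᴴ) v u = starRingEnd ℂ (opForm (φ P) u v) := by
  have := (posSemidef_cpGram hφ ![1, P] ![u, v]).isHermitian.apply 1 0
  simpa [cpGram] using this.symm

lemma opForm_mul_conjTranspose (hφ : IsCPMap φ) {b : Matrix ι ι A} {v w : ι → Y}
    (hbb : opForm (φ (b * bᴴ)) v v = opForm (φ 1) w w)
    (hb : opForm (φ b) v w = opForm (φ 1) w w) (P : Matrix ι ι A) (u : ι → Y) :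
    opForm (φ (P * bᴴ)) u v = opForm (φ P) u w := by
  set G := cpGram φ ![Pᴴ, bᴴ, 1] ![u, v, w]
  have hG : G.PosSemidef := posSemidef_cpGram hφ _ _
  have hg : starRingEnd ℂ (opForm (φ 1) w w) = opForm (φ 1) w w := by
    simpa using (opForm_conjTranspose hφ 1 w w).symm
  have hbstar : opForm (φ bᴴ) w v = opForm (φ 1) w w := by
    rw [opForm_conjTranspose hφ, hb, hg]
  -- `x` encodes `(bᴴ ⊗ v) - (1 ⊗ w)`, a null vector of the Gram form
  let x : Fin 3 → ℂ := ![0, 1, -1]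
  have hnull : star x ⬝ᵥ (G *ᵥ x) = 0 := by
    simp [x, G, cpGram, dotProduct, Matrix.mulVec, Fin.sum_univ_three, hbb, hb, hbstar]
  have := congrFun ((hG.dotProduct_mulVec_zero_iff x).mp hnull) 0
  simpa [x, G, cpGram, Matrix.mulVec, dotProduct, Fin.sum_univ_three, add_neg_eq_zero] using this

end CompletelyPositive

section Bimodule

variable {ι : Type*} [Fintype ι] [DecidableEq ι] {A : Type*} [Semiring A] [StarRing A]
  [Algebra ℂ A] [StarModule ℂ A] {Y : Type*} [NormedAddCommGroup Y] [InnerProductSpace ℂ Y]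
  {φ : Matrix ι ι A → Matrix ι ι (Y →L[ℂ] Y)}

lemma opForm_mul_matC_conjTranspose (hφ : IsCPMap φ) {δ : Matrix ι ι ℂ}
    (hδδ : φ (sandwich δ (1 : Matrix ι ι A) δ) = sandwich δ (φ 1) δ)
    (hδ : φ (sandwich δ (1 : Matrix ι ι A) 1) = sandwich δ (φ 1) 1)
    (P : Matrix ι ι A) (u v : ι → Y) :
    opForm (φ (P * (matC A δ)ᴴ)) u v = opForm (φ P) u (cMulVec δᴴ v) := by
  refine opForm_mul_conjTranspose hφ ?_ ?_ P u
  · rw [sandwich_eq_matC_mul, mul_one] at hδδ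
    rw [hδδ, opForm_sandwich]
  · rw [← sandwich_one_one_s4, hδ, opForm_sandwich, Matrix.conjTranspose_one, cMulVec_one]

lemma opForm_matC_mul (hφ : IsCPMap φ) {γ : Matrix ι ι ℂ}
    (hγγ : φ (sandwich γ (1 : Matrix ι ι A) γ) = sandwich γ (φ 1) γ)
    (hγ : φ (sandwich γ (1 : Matrix ι ι A) 1) = sandwich γ (φ 1) 1)
    (P : Matrix ι ι A) (u v : ι → Y) :
    opForm (φ (matC A γ * P)) u v = opForm (φ P) (cMulVec γᴴ u) v := by
  apply (starRingEnd ℂ).injective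
  rw [← opForm_conjTranspose hφ, Matrix.conjTranspose_mul,
    opForm_mul_matC_conjTranspose hφ hγγ hγ, opForm_conjTranspose hφ]

theorem isBimod_of_sandwich_one (hφ : IsCPMap φ) {S : Set (Matrix ι ι ℂ)} (hS : 1 ∈ S)
    (h : ∀ γ ∈ S, ∀ δ ∈ S, φ (sandwich γ 1 δ) = sandwich γ (φ 1) δ) : IsBimod S φ := by
  intro α hα β hβ P
  refine ext_opForm fun u v => ?_
  rw [sandwich_eq_matC_mul, mul_assoc, opForm_matC_mul hφ (h α hα α hα) (h α hα 1 hS),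
    opForm_mul_matC_conjTranspose hφ (h β hβ β hβ) (h β hβ 1 hS), opForm_sandwich]

end Bimodule

theorem statement4_general {M : ℕ} (S : Subalgebra ℂ (Matrix (Fin M) (Fin M) ℂ))
    {A : Type*} [CStarAlgebra A]
    {Y : Type*} [NormedAddCommGroup Y] [InnerProductSpace ℂ Y]
    (SS : Submodule ℂ (Matrix (Fin M) (Fin M) A))
    (hone : (1 : Matrix (Fin M) (Fin M) A) ∈ SS)
    (hsub : ∀ α ∈ S, ∀ β ∈ S, ∀ P ∈ SS, sandwich α P β ∈ SS)
    (φ₀ : SS →ₗ[ℂ] Matrix (Fin M) (Fin M) (Y →L[ℂ] Y))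
    (hbm₀ : ∀ α ∈ S, ∀ β ∈ S,
        ∀ (P : Matrix (Fin M) (Fin M) A) (hP : P ∈ SS) (hP' : sandwich α P β ∈ SS),
          φ₀ ⟨sandwich α P β, hP'⟩ = sandwich α (φ₀ ⟨P, hP⟩) β)
    (φ : Matrix (Fin M) (Fin M) A →ₗ[ℂ] Matrix (Fin M) (Fin M) (Y →L[ℂ] Y))
    (hcp : IsCPMap ⇑φ)
    (hext : ∀ (P : Matrix (Fin M) (Fin M) A) (hP : P ∈ SS), φ P = φ₀ ⟨P, hP⟩) :
    IsBimod (S : Set (Matrix (Fin M) (Fin M) ℂ)) ⇑φ := by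
  refine isBimod_of_sandwich_one hcp S.one_mem fun γ hγ δ hδ => ?_
  have hmem := hsub γ hγ δ hδ 1 hone
  rw [hext _ hmem, hbm₀ γ hγ δ hδ 1 hone hmem, hext 1 hone]

/-- Corollary 2.5: if `𝕊 ⊆ A^{M×M}` is an operator system which is also
an `(S,S^*)`-sub-bimodule, `φ₀ : 𝕊 → L(Y^M)` is a completely positive `(S,S^*)`-bimodule
map, then every completely positive extension `φ : A^{M×M} → L(Y^M)` of `φ₀` is an
`(S,S^*)`-bimodule map. -/
theorem statement4 {M : ℕ} (S : Subalgebra ℂ (Matrix (Fin M) (Fin M) ℂ))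
    {A : Type*} [CStarAlgebra A]
    {Y : Type*} [NormedAddCommGroup Y] [InnerProductSpace ℂ Y] [CompleteSpace Y]
    (SS : Submodule ℂ (Matrix (Fin M) (Fin M) A))
    (hone : (1 : Matrix (Fin M) (Fin M) A) ∈ SS)
    (hstarmem : ∀ P ∈ SS, Pᴴ ∈ SS)
    (hsub : ∀ α ∈ S, ∀ β ∈ S, ∀ P ∈ SS, sandwich α P β ∈ SS)
    (φ₀ : SS →ₗ[ℂ] Matrix (Fin M) (Fin M) (Y →L[ℂ] Y))
    (hcp₀ : ∀ (k : ℕ) (Q : Matrix (Fin k) (Fin k) SS),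
        MatPos (Matrix.of fun i j => ((Q i j : Matrix (Fin M) (Fin M) A))) →
        OpMatPos2 (Matrix.of fun i j => φ₀ (Q i j)))
    (hbm₀ : ∀ α ∈ S, ∀ β ∈ S,
        ∀ (P : Matrix (Fin M) (Fin M) A) (hP : P ∈ SS) (hP' : sandwich α P β ∈ SS),
          φ₀ ⟨sandwich α P β, hP'⟩ = sandwich α (φ₀ ⟨P, hP⟩) β)
    (φ : Matrix (Fin M) (Fin M) A →ₗ[ℂ] Matrix (Fin M) (Fin M) (Y →L[ℂ] Y))
    (hcp : IsCPMap ⇑φ)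
    (hext : ∀ (P : Matrix (Fin M) (Fin M) A) (hP : P ∈ SS), φ P = φ₀ ⟨P, hP⟩) :
    IsBimod (S : Set (Matrix (Fin M) (Fin M) ℂ)) ⇑φ :=
  statement4_general S SS hone hsub φ₀ hbm₀ φ hcp hext

end NCK

end
end

section
/- Let K be a Hermitian noncommutative kernel on Ω ⊆ V_nc with values in L(A_nc, L(Y)_nc). Then K is decomposable (K = K₊ − K₋ with K₊, K₋ completely positive nc kernels) if and only if there exist completely positive nc kernels L₁ and L₂ on Ω with values in L(A_nc, L(Y)_nc) such that the 2×2-block kernel 𝕂(Z,W)(P) = [[L₁(Z,W)(P), K(Z,W)(P)], [K(Z,W)(P), L₂(Z,W)(P)]], with values in L(A_nc, L(Y ⊕ Y)_nc), is a completely positive nc kernel. -/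
open scoped ComplexOrder Matrix

noncomputable section

namespace NCK

variable {Y : Type*} [NormedAddCommGroup Y] [InnerProductSpace ℂ Y]

/-! If `K = K₁ - K₂`, take `L₁ = L₂ = K₁ + K₂`: pairing the block kernel
`[[K₁ + K₂, K₁ - K₂], [K₁ - K₂, K₁ + K₂]]` with `(x, x')` gives the `K₁`-form at `x + x'` plus
the `K₂`-form at `x - x'`. Conversely, compressing a completely positive block kernel
`[[L₁, K], [K, L₂]]` by `x ↦ (x, ±x) / 2` shows that `(L₁ + L₂) / 4 ± K / 2` are completely
positive, and their difference is `K`. -/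

section Sandwich

variable {p q p' q' : Type*} [Fintype p] [Fintype q] {M : Type*}

lemma sandwich_add [AddCommMonoid M] [Module ℂ M] (α : Matrix p' p ℂ) (P Q : Matrix p q M)
    (β : Matrix q' q ℂ) : sandwich α (P + Q) β = sandwich α P β + sandwich α Q β := by
  ext i k
  simp [sandwich, cMul, mulC, smul_add, Finset.sum_add_distrib]

lemma sandwich_sub [AddCommGroup M] [Module ℂ M] (α : Matrix p' p ℂ) (P Q : Matrix p q M)
    (β : Matrix q' q ℂ) : sandwich α (P - Q) β = sandwich α P β - sandwich α Q β := by
  ext i k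
  simp [sandwich, cMul, mulC, smul_sub, Finset.sum_sub_distrib]

lemma sandwich_smul [AddCommMonoid M] [Module ℂ M] (α : Matrix p' p ℂ) (c : ℂ)
    (P : Matrix p q M) (β : Matrix q' q ℂ) : sandwich α (c • P) β = c • sandwich α P β := by
  ext i k
  simp [sandwich, cMul, mulC, smul_comm c, Finset.smul_sum]

end Sandwich

section KernelAlgebra

variable {V A B : Type*} {Ω : NCSet V} {K K' : KernelFam V A B}

namespace GradedLinearOn

variable [AddCommMonoid A] [Module ℂ A]

lemma add [AddCommMonoid B] [Module ℂ B] (h : GradedLinearOn Ω K) (h' : GradedLinearOn Ω K') :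
    GradedLinearOn Ω (K + K') := fun n m Z W hZ hW =>
  ⟨fun P Q => by
    simp only [Pi.add_apply, (h n m Z W hZ hW).map_add, (h' n m Z W hZ hW).map_add]; abel,
   fun c P => by
    simp only [Pi.add_apply, (h n m Z W hZ hW).map_smul, (h' n m Z W hZ hW).map_smul, smul_add]⟩

lemma sub [AddCommGroup B] [Module ℂ B] (h : GradedLinearOn Ω K) (h' : GradedLinearOn Ω K') :
    GradedLinearOn Ω (K - K') := fun n m Z W hZ hW =>
  ⟨fun P Q => by
    simp only [Pi.sub_apply, (h n m Z W hZ hW).map_add, (h' n m Z W hZ hW).map_add]; abel,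
   fun c P => by
    simp only [Pi.sub_apply, (h n m Z W hZ hW).map_smul, (h' n m Z W hZ hW).map_smul, smul_sub]⟩

lemma const_smul [AddCommMonoid B] [Module ℂ B] (h : GradedLinearOn Ω K) (c : ℂ) :
    GradedLinearOn Ω (c • K) := fun n m Z W hZ hW =>
  ⟨fun P Q => by simp only [Pi.smul_apply, (h n m Z W hZ hW).map_add, smul_add],
   fun d P => by simp only [Pi.smul_apply, (h n m Z W hZ hW).map_smul, smul_comm c d]⟩

end GradedLinearOn

namespace IsNCKernelOn

variable [AddCommMonoid V] [Module ℂ V] [AddCommMonoid A] [Module ℂ A]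

lemma add [AddCommMonoid B] [Module ℂ B] (h : IsNCKernelOn Ω K) (h' : IsNCKernelOn Ω K') :
    IsNCKernelOn Ω (K + K') :=
  fun n n' m m' Z Z' W W' hZ hZ' hW hW' α β hα hβ P => by
    simp only [Pi.add_apply, sandwich_add, h n n' m m' Z Z' W W' hZ hZ' hW hW' α β hα hβ P,
      h' n n' m m' Z Z' W W' hZ hZ' hW hW' α β hα hβ P]

lemma sub [AddCommGroup B] [Module ℂ B] (h : IsNCKernelOn Ω K) (h' : IsNCKernelOn Ω K') :
    IsNCKernelOn Ω (K - K') :=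
  fun n n' m m' Z Z' W W' hZ hZ' hW hW' α β hα hβ P => by
    simp only [Pi.sub_apply, sandwich_sub, h n n' m m' Z Z' W W' hZ hZ' hW hW' α β hα hβ P,
      h' n n' m m' Z Z' W W' hZ hZ' hW hW' α β hα hβ P]

lemma const_smul [AddCommMonoid B] [Module ℂ B] (h : IsNCKernelOn Ω K) (c : ℂ) :
    IsNCKernelOn Ω (c • K) :=
  fun n n' m m' Z Z' W W' hZ hZ' hW hW' α β hα hβ P => by
    simp only [Pi.smul_apply, sandwich_smul, h n n' m m' Z Z' W W' hZ hZ' hW hW' α β hα hβ P]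

end IsNCKernelOn

end KernelAlgebra

namespace IsCPOnH

variable {V A : Type*} [NonUnitalSemiring A] [StarRing A] {Ω : NCSet V}
  {K K' : KernelFam V A (Y →L[ℂ] Y)}

lemma add (h : IsCPOnH Ω K) (h' : IsCPOnH Ω K') : IsCPOnH Ω (K + K') := by
  intro L ns Z hZ P y
  simpa only [← Finset.sum_add_distrib, ← inner_add_right, Pi.add_apply, Matrix.add_apply,
    add_apply] using add_nonneg (h L ns Z hZ P y) (h' L ns Z hZ P y)

lemma congr (h : IsCPOnH Ω K)
    (hKK' : ∀ n m Z W, Z ∈ Ω n → W ∈ Ω m → ∀ P, K n m Z W P = K' n m Z W P) :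
    IsCPOnH Ω K' := by
  intro L ns Z hZ P y
  simpa only [hKK', hZ] using h L ns Z hZ P y

end IsCPOnH

section Block

lemma blk2_apply (T : Matrix (Fin 2) (Fin 2) (Y →L[ℂ] Y)) (x : PiLp 2 fun _ : Fin 2 => Y)
    (s : Fin 2) : blk2 T x s = ∑ t, T s t (x t) := by
  simp [blk2]

lemma blk2_add (T T' : Matrix (Fin 2) (Fin 2) (Y →L[ℂ] Y)) :
    blk2 (T + T') = blk2 T + blk2 T' := by
  ext x s
  simp [blk2_apply, Finset.sum_add_distrib]

lemma blk2_smul (c : ℂ) (T : Matrix (Fin 2) (Fin 2) (Y →L[ℂ] Y)) :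
    blk2 (c • T) = c • blk2 T := by
  ext x s
  simp [blk2_apply]

lemma inner_blk2 (a b c d : Y →L[ℂ] Y) (x z : PiLp 2 fun _ : Fin 2 => Y) :
    (inner ℂ x (blk2 !![a, b; c, d] z) : ℂ)
      = inner ℂ (x 0) (a (z 0)) + inner ℂ (x 0) (b (z 1))
        + inner ℂ (x 1) (c (z 0)) + inner ℂ (x 1) (d (z 1)) := by
  simp only [PiLp.inner_apply, blk2_apply, Matrix.of_apply, Matrix.cons_val', Matrix.cons_val_zero,
    Matrix.cons_val_one, Matrix.cons_val_fin_one, Fin.sum_univ_two, inner_add_right]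
  ring

lemma inner_blk2_add_sub (T₁ T₂ : Y →L[ℂ] Y) (x z : PiLp 2 fun _ : Fin 2 => Y) :
    (inner ℂ x (blk2 !![T₁ + T₂, T₁ - T₂; T₁ - T₂, T₁ + T₂] z) : ℂ)
      = inner ℂ (x 0 + x 1) (T₁ (z 0 + z 1)) + inner ℂ (x 0 - x 1) (T₂ (z 0 - z 1)) := by
  simp only [inner_blk2, add_apply, sub_apply,
    map_add, map_sub, inner_add_left, inner_add_right, inner_sub_left, inner_sub_right]
  ring

lemma inner_blk2_toLp_smul (a b c d : Y →L[ℂ] Y) (s t : ℂ) (x z : Y) :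
    (inner ℂ (WithLp.toLp 2 ![s • x, t • x])
        (blk2 !![a, b; c, d] (WithLp.toLp 2 ![s • z, t • z])) : ℂ)
      = inner ℂ x (((starRingEnd ℂ s * s) • a + (starRingEnd ℂ s * t) • b
          + (starRingEnd ℂ t * s) • c + (starRingEnd ℂ t * t) • d) z) := by
  simp only [inner_blk2, Matrix.cons_val_zero, Matrix.cons_val_one, Matrix.cons_val_fin_one,
    add_apply, smul_apply, map_smul, inner_add_right, inner_smul_left, inner_smul_right]
  ring

variable {V A : Type*}

def blockKernel (L₁ K₁₂ K₂₁ L₂ : KernelFam V A (Y →L[ℂ] Y)) :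
    KernelFam V A ((PiLp 2 fun _ : Fin 2 => Y) →L[ℂ] (PiLp 2 fun _ : Fin 2 => Y)) :=
  fun n m Z W P => Matrix.of fun i j =>
    blk2 !![L₁ n m Z W P i j, K₁₂ n m Z W P i j; K₂₁ n m Z W P i j, L₂ n m Z W P i j]

variable {Ω : NCSet V} {L₁ K₁₂ K₂₁ L₂ : KernelFam V A (Y →L[ℂ] Y)}

lemma GradedLinearOn.blockKernel [AddCommMonoid A] [Module ℂ A] (h₁ : GradedLinearOn Ω L₁)
    (h₁₂ : GradedLinearOn Ω K₁₂) (h₂₁ : GradedLinearOn Ω K₂₁) (h₂ : GradedLinearOn Ω L₂) :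
    GradedLinearOn Ω (blockKernel L₁ K₁₂ K₂₁ L₂) := fun n m Z W hZ hW =>
  ⟨fun P Q => by
    ext i j : 1
    simp [NCK.blockKernel, (h₁ n m Z W hZ hW).map_add, (h₁₂ n m Z W hZ hW).map_add,
      (h₂₁ n m Z W hZ hW).map_add, (h₂ n m Z W hZ hW).map_add, ← blk2_add],
   fun c P => by
    ext i j : 1
    simp [NCK.blockKernel, (h₁ n m Z W hZ hW).map_smul, (h₁₂ n m Z W hZ hW).map_smul,
      (h₂₁ n m Z W hZ hW).map_smul, (h₂ n m Z W hZ hW).map_smul, ← blk2_smul]⟩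

lemma IsNCKernelOn.blockKernel [AddCommMonoid V] [Module ℂ V] [AddCommMonoid A] [Module ℂ A]
    (h₁ : IsNCKernelOn Ω L₁) (h₁₂ : IsNCKernelOn Ω K₁₂) (h₂₁ : IsNCKernelOn Ω K₂₁)
    (h₂ : IsNCKernelOn Ω L₂) : IsNCKernelOn Ω (blockKernel L₁ K₁₂ K₂₁ L₂) :=
  fun n n' m m' Z Z' W W' hZ hZ' hW hW' α β hα hβ P => by
    simp only [NCK.blockKernel]
    rw [← h₁ n n' m m' Z Z' W W' hZ hZ' hW hW' α β hα hβ P,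
      ← h₁₂ n n' m m' Z Z' W W' hZ hZ' hW hW' α β hα hβ P,
      ← h₂₁ n n' m m' Z Z' W W' hZ hZ' hW hW' α β hα hβ P,
      ← h₂ n n' m m' Z Z' W W' hZ hZ' hW hW' α β hα hβ P]
    ext i k x s
    simp only [sandwich, cMul, mulC, Matrix.of_apply]
    fin_cases s <;>
      simp [blk2_apply, Fin.sum_univ_two, smul_add, Finset.sum_add_distrib, sum_apply]

variable [NonUnitalSemiring A] [StarRing A] {K₁ K₂ : KernelFam V A (Y →L[ℂ] Y)}

lemma IsCPOnH.blockKernel_add_sub (h₁ : IsCPOnH Ω K₁) (h₂ : IsCPOnH Ω K₂) :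
    IsCPOnH Ω (blockKernel (K₁ + K₂) (K₁ - K₂) (K₁ - K₂) (K₁ + K₂)) := by
  intro L ns Z hZ P y
  have hsum := add_nonneg (h₁ L ns Z hZ P fun l a => y l a 0 + y l a 1)
    (h₂ L ns Z hZ P fun l a => y l a 0 - y l a 1)
  simp only [← Finset.sum_add_distrib] at hsum
  simpa only [NCK.blockKernel, Matrix.of_apply, Pi.add_apply, Pi.sub_apply, Matrix.add_apply,
    Matrix.sub_apply, inner_blk2_add_sub] using hsum

lemma IsCPOnH.compress_blockKernel (h : IsCPOnH Ω (blockKernel L₁ K₁₂ K₂₁ L₂)) (s t : ℂ) :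
    IsCPOnH Ω ((starRingEnd ℂ s * s) • L₁ + (starRingEnd ℂ s * t) • K₁₂
      + (starRingEnd ℂ t * s) • K₂₁ + (starRingEnd ℂ t * t) • L₂) := by
  intro L ns Z hZ P y
  simpa only [NCK.blockKernel, Matrix.of_apply, inner_blk2_toLp_smul, Pi.add_apply,
    Pi.smul_apply, Matrix.add_apply, Matrix.smul_apply, add_apply, smul_apply]
    using h L ns Z hZ P fun l a => WithLp.toLp 2 ![s • y l a, t • y l a]

end Block

theorem statement8_general {V : Type*} [AddCommGroup V] [Module ℂ V]
    {A : Type*} [CStarAlgebra A]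
    {Y : Type*} [NormedAddCommGroup Y] [InnerProductSpace ℂ Y]
    (Ω : NCSet V) (K : KernelFam V A (Y →L[ℂ] Y))
    (hgl : GradedLinearOn Ω K) (hnc : IsNCKernelOn Ω K) :
    (∃ K₁ K₂ : KernelFam V A (Y →L[ℂ] Y),
        IsCPNCKernelOnH Ω K₁ ∧ IsCPNCKernelOnH Ω K₂ ∧
        ∀ (n m : ℕ) (Z : Matrix (Fin n) (Fin n) V) (W : Matrix (Fin m) (Fin m) V),
          Z ∈ Ω n → W ∈ Ω m → ∀ P : Matrix (Fin n) (Fin m) A,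
            K n m Z W P = K₁ n m Z W P - K₂ n m Z W P) ↔
    (∃ L₁ L₂ : KernelFam V A (Y →L[ℂ] Y),
        IsCPNCKernelOnH Ω L₁ ∧ IsCPNCKernelOnH Ω L₂ ∧
        IsCPNCKernelOnH Ω
          (fun n m Z W (P : Matrix (Fin n) (Fin m) A) => Matrix.of fun i j =>
            blk2 !![L₁ n m Z W P i j, K n m Z W P i j;
                     K n m Z W P i j, L₂ n m Z W P i j])) := by
  constructor
  · rintro ⟨K₁, K₂, ⟨h₁l, h₁n, h₁c⟩, ⟨h₂l, h₂n, h₂c⟩, hK⟩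
    have hsum : IsCPNCKernelOnH Ω (K₁ + K₂) := ⟨h₁l.add h₂l, h₁n.add h₂n, h₁c.add h₂c⟩
    refine ⟨K₁ + K₂, K₁ + K₂, hsum, hsum, hsum.1.blockKernel hgl hgl hsum.1,
      hsum.2.1.blockKernel hnc hnc hsum.2.1, (h₁c.blockKernel_add_sub h₂c).congr ?_⟩
    intro n m Z W hZ hW P
    simp only [blockKernel, Pi.sub_apply, hK n m Z W hZ hW P]
  · rintro ⟨L₁, L₂, ⟨h₁l, h₁n, -⟩, ⟨h₂l, h₂n, -⟩, -, -, hc⟩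
    have hhalf : starRingEnd ℂ (1 / 2) = 1 / 2 := by simp [map_ofNat]
    refine ⟨(1 / 4 : ℂ) • (L₁ + L₂) + (1 / 2 : ℂ) • K, (1 / 4 : ℂ) • (L₁ + L₂) - (1 / 2 : ℂ) • K,
      ⟨((h₁l.add h₂l).const_smul _).add (hgl.const_smul _),
        ((h₁n.add h₂n).const_smul _).add (hnc.const_smul _), ?_⟩,
      ⟨((h₁l.add h₂l).const_smul _).sub (hgl.const_smul _),
        ((h₁n.add h₂n).const_smul _).sub (hnc.const_smul _), ?_⟩,
      fun n m Z W _ _ P => ?_⟩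
    · convert hc.compress_blockKernel (1 / 2) (1 / 2) using 1
      rw [hhalf]
      module
    · convert hc.compress_blockKernel (1 / 2) (-(1 / 2)) using 1
      rw [map_neg, hhalf]
      module
    · simp only [Pi.add_apply, Pi.sub_apply, Pi.smul_apply]
      module

/-- Proposition 3.2, (1) ⇔ (3): a Hermitian noncommutative kernel `K`
on `Ω ⊆ V_nc` with values in `L(A_nc, L(Y)_nc)` is decomposable if and only if there are
completely positive nc kernels `L₁, L₂` such that the `2×2`-block kernel
`𝕂 = [[L₁, K], [K, L₂]]`, with values in `L(A_nc, L(Y ⊕ Y)_nc)`, is a completely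
positive nc kernel. -/
theorem statement8 {V : Type*} [AddCommGroup V] [Module ℂ V]
    {A : Type*} [CStarAlgebra A]
    {Y : Type*} [NormedAddCommGroup Y] [InnerProductSpace ℂ Y] [CompleteSpace Y]
    (Ω : NCSet V) (K : KernelFam V A (Y →L[ℂ] Y))
    (hgl : GradedLinearOn Ω K) (hnc : IsNCKernelOn Ω K) (hherm : IsHermitianOn Ω K) :
    (∃ K₁ K₂ : KernelFam V A (Y →L[ℂ] Y),
        IsCPNCKernelOnH Ω K₁ ∧ IsCPNCKernelOnH Ω K₂ ∧
        ∀ (n m : ℕ) (Z : Matrix (Fin n) (Fin n) V) (W : Matrix (Fin m) (Fin m) V),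
          Z ∈ Ω n → W ∈ Ω m → ∀ P : Matrix (Fin n) (Fin m) A,
            K n m Z W P = K₁ n m Z W P - K₂ n m Z W P) ↔
    (∃ L₁ L₂ : KernelFam V A (Y →L[ℂ] Y),
        IsCPNCKernelOnH Ω L₁ ∧ IsCPNCKernelOnH Ω L₂ ∧
        IsCPNCKernelOnH Ω
          (fun n m Z W (P : Matrix (Fin n) (Fin m) A) => Matrix.of fun i j =>
            blk2 !![L₁ n m Z W P i j, K n m Z W P i j;
                     K n m Z W P i j, L₂ n m Z W P i j])) :=
  statement8_general Ω K hgl hnc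

end NCK

end
end
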